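/- arXiv:1208.4264 — 2 statements merged into one kernel-verified Lean document; each statement's English description precedes it below -/
import Mathlib

section
/- Let θ > 0, a, b ∈ ℝ, ρ ∈ ℝ \ {0} with a² + 4ρθ < 0, and set λ := √(-a² - 4ρθ). For x₀ ∈ ℝ define, for t ∈ (0, π/λ) and x ∈ ℝ, P(t, x) = (λ/(4πθ·sin(λt)))^{1/2} · exp{(a/2 + ρb²/λ²)t - (a²b²/(4θλ³))·cot(λt)} · exp{(a/(4θ) - (λ/(4θ))·cot(λt))·(x² + x₀²)} · exp{(λ/(2θ·sin(λt)))·x·x₀} · exp{((ab/(2θλ))·cot(λt) + b/(2θ))·x} · exp{(-(ab/(2θλ·sin(λt))) + b/(2θ))·x₀}. Then P satisfies ∂ₜP(t,x) = θ·∂ₓ²P(t,x) - (ax + b)·∂ₓP(t,x) - ρx²·P(t,x) for all t ∈ (0, π/λ) and x ∈ ℝ. -/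
/-!
The kernel is a Gaussian ansatz `S(t) · exp (A(t) x² + B(t) x + C(t))`. For such a function,
comparing the coefficients of `x²`, `x` and `1` reduces the equation
`∂ₜu = θ ∂ₓ²u - (ax + b) ∂ₓu - ρ x² u` to the Riccati system
`A' = 4θA² - 2aA - ρ`, `B' = (4θA - a) B - 2bA`, `S'/S + C' = θB² + 2θA - bB`.
Here `S² ∝ ς` and `A`, `B`, `C - (a/2 + ρb²/λ²) t` are affine in `κ = cot (λt)` and
`ς = 1 / sin (λt)`, which satisfy `κ' = -λς²`, `ς' = -λκς` and `ς² = 1 + κ²`;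
together with `λ² = -a² - 4ρθ` this turns the system into polynomial identities in `κ`, `ς`.
-/

open Real

noncomputable def gaussianAnsatz (S A B C : ℝ → ℝ) (t x : ℝ) : ℝ :=
  S t * exp (A t * x ^ 2 + B t * x + C t)

theorem hasDerivAt_mul_exp_quadratic (s A B C x : ℝ) :
    HasDerivAt (fun y => s * exp (A * y ^ 2 + B * y + C))
      (s * exp (A * x ^ 2 + B * x + C) * (2 * A * x + B)) x := by
  have hq : HasDerivAt (fun y => A * y ^ 2 + B * y + C) (2 * A * x + B) x := by
    simpa using ((((hasDerivAt_pow 2 x).const_mul A).add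
      ((hasDerivAt_id x).const_mul B)).add_const C).congr_deriv (by ring)
  simpa only [mul_assoc] using hq.exp.const_mul s

theorem deriv_deriv_mul_exp_quadratic (s A B C x : ℝ) :
    deriv (deriv fun y => s * exp (A * y ^ 2 + B * y + C)) x
      = s * exp (A * x ^ 2 + B * x + C) * ((2 * A * x + B) ^ 2 + 2 * A) := by
  rw [funext fun y => (hasDerivAt_mul_exp_quadratic s A B C y).deriv]
  have hlin : HasDerivAt (fun y => 2 * A * y + B) (2 * A) x := by
    simpa using ((hasDerivAt_id x).const_mul (2 * A)).add_const B
  exact ((hasDerivAt_mul_exp_quadratic s A B C x).mul hlin).deriv.trans (by ring)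

theorem gaussianAnsatz_heat_eq {θ a b ρ σ t : ℝ} {S A B C : ℝ → ℝ} (x : ℝ)
    (hS : HasDerivAt S (σ * S t) t)
    (hA : HasDerivAt A (4 * θ * A t ^ 2 - 2 * a * A t - ρ) t)
    (hB : HasDerivAt B (4 * θ * A t * B t - a * B t - 2 * b * A t) t)
    (hC : HasDerivAt C (θ * B t ^ 2 + 2 * θ * A t - b * B t - σ) t) :
    deriv (fun t' => gaussianAnsatz S A B C t' x) t =
      θ * deriv (deriv fun x' => gaussianAnsatz S A B C t x') x
        - (a * x + b) * deriv (fun x' => gaussianAnsatz S A B C t x') x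
        - ρ * x ^ 2 * gaussianAnsatz S A B C t x := by
  simp only [gaussianAnsatz]
  have hE : HasDerivAt (fun t' => A t' * x ^ 2 + B t' * x + C t') _ t :=
    ((hA.mul_const (x ^ 2)).add (hB.mul_const x)).add hC
  have ht : HasDerivAt (fun t' => S t' * exp (A t' * x ^ 2 + B t' * x + C t')) _ t :=
    hS.mul hE.exp
  rw [ht.deriv, deriv_deriv_mul_exp_quadratic, (hasDerivAt_mul_exp_quadratic _ _ _ _ x).deriv]
  ring

theorem HasDerivAt.sqrt_of_deriv_eq_mul {q : ℝ → ℝ} {μ t : ℝ}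
    (hq : HasDerivAt q (μ * q t) t) (h0 : q t ≠ 0) :
    HasDerivAt (fun t => √(q t)) (μ / 2 * √(q t)) t :=
  (hq.sqrt h0).congr_deriv <| by
    rw [show μ * q t / (2 * √(q t)) = μ / 2 * (q t / √(q t)) by ring, div_sqrt]

theorem inv_sin_sq_eq_one_add_cot_sq {x : ℝ} (h : sin x ≠ 0) :
    (sin x)⁻¹ ^ 2 = 1 + cot x ^ 2 := by
  rw [cot_eq_cos_div_sin]
  field_simp
  linear_combination -(sin_sq_add_cos_sq x)

theorem hasDerivAt_cot_const_mul {l t : ℝ} (h : sin (l * t) ≠ 0) :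
    HasDerivAt (fun t => cot (l * t)) (-l * (sin (l * t))⁻¹ ^ 2) t := by
  have hlt : HasDerivAt (fun t => l * t) l t := by simpa using (hasDerivAt_id t).const_mul l
  simp only [cot_eq_cos_div_sin]
  exact (hlt.cos.div hlt.sin h).congr_deriv (by
    field_simp; linear_combination -l * sin_sq_add_cos_sq (l * t))

theorem hasDerivAt_inv_sin_const_mul {l t : ℝ} (h : sin (l * t) ≠ 0) :
    HasDerivAt (fun t => (sin (l * t))⁻¹) (-l * cot (l * t) * (sin (l * t))⁻¹) t := by
  have hlt : HasDerivAt (fun t => l * t) l t := by simpa using (hasDerivAt_id t).const_mul l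
  exact (hlt.sin.inv h).congr_deriv (by rw [cot_eq_cos_div_sin]; field_simp)

section TypeIII

variable (θ a b ρ lam x₀ : ℝ)

noncomputable def typeIIIAmplitude (t : ℝ) : ℝ :=
  √(lam / (4 * π * θ) * (sin (lam * t))⁻¹)

noncomputable def typeIIIQuad (t : ℝ) : ℝ := a / (4 * θ) - lam / (4 * θ) * cot (lam * t)

noncomputable def typeIIILin (t : ℝ) : ℝ :=
  lam / (2 * θ) * x₀ * (sin (lam * t))⁻¹ + a * b / (2 * θ * lam) * cot (lam * t)
    + b / (2 * θ)

noncomputable def typeIIIConst (t : ℝ) : ℝ :=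
  (a / 2 + ρ * b ^ 2 / lam ^ 2) * t
    - (a ^ 2 * b ^ 2 / (4 * θ * lam ^ 3) + lam / (4 * θ) * x₀ ^ 2) * cot (lam * t)
    - a * b / (2 * θ * lam) * x₀ * (sin (lam * t))⁻¹
    + (a / (4 * θ) * x₀ ^ 2 + b / (2 * θ) * x₀)

variable {θ a b ρ lam x₀} {t : ℝ}

theorem hasDerivAt_typeIIIAmplitude (hθ : θ ≠ 0) (hlam : lam ≠ 0) (hs : sin (lam * t) ≠ 0) :
    HasDerivAt (typeIIIAmplitude θ lam)
      (-lam * cot (lam * t) / 2 * typeIIIAmplitude θ lam t) t :=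
  (((hasDerivAt_inv_sin_const_mul hs).const_mul _).congr_deriv (by ring)).sqrt_of_deriv_eq_mul
    (by have := pi_ne_zero; simp_all)

theorem hasDerivAt_typeIIIQuad (hθ : θ ≠ 0) (hlam2 : lam ^ 2 = -a ^ 2 - 4 * ρ * θ)
    (hs : sin (lam * t) ≠ 0) :
    HasDerivAt (typeIIIQuad θ a lam)
      (4 * θ * typeIIIQuad θ a lam t ^ 2 - 2 * a * typeIIIQuad θ a lam t - ρ) t := by
  refine (((hasDerivAt_cot_const_mul hs).const_mul _).const_sub _).congr_deriv ?_
  rw [inv_sin_sq_eq_one_add_cot_sq hs, typeIIIQuad]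
  field_simp
  linear_combination hlam2

theorem hasDerivAt_typeIIILin (hθ : θ ≠ 0) (hlam : lam ≠ 0) (hs : sin (lam * t) ≠ 0) :
    HasDerivAt (typeIIILin θ a b lam x₀)
      (4 * θ * typeIIIQuad θ a lam t * typeIIILin θ a b lam x₀ t
        - a * typeIIILin θ a b lam x₀ t - 2 * b * typeIIIQuad θ a lam t) t := by
  refine ((((hasDerivAt_inv_sin_const_mul hs).const_mul _).add
    ((hasDerivAt_cot_const_mul hs).const_mul _)).add_const _).congr_deriv ?_
  rw [inv_sin_sq_eq_one_add_cot_sq hs, typeIIIQuad, typeIIILin]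
  field_simp
  ring

theorem hasDerivAt_typeIIIConst (hθ : θ ≠ 0) (hlam : lam ≠ 0)
    (hlam2 : lam ^ 2 = -a ^ 2 - 4 * ρ * θ) (hs : sin (lam * t) ≠ 0) :
    HasDerivAt (typeIIIConst θ a b ρ lam x₀)
      (θ * typeIIILin θ a b lam x₀ t ^ 2 + 2 * θ * typeIIIQuad θ a lam t
        - b * typeIIILin θ a b lam x₀ t - (-lam * cot (lam * t) / 2)) t := by
  refine (((((hasDerivAt_id t).const_mul _).sub ((hasDerivAt_cot_const_mul hs).const_mul _)).sub
    ((hasDerivAt_inv_sin_const_mul hs).const_mul _)).add_const _).congr_deriv ?_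
  have hςκ := inv_sin_sq_eq_one_add_cot_sq hs
  rw [typeIIIQuad, typeIIILin]
  generalize (sin (lam * t))⁻¹ = ς at *
  generalize cot (lam * t) = κ at *
  field_simp
  linear_combination 4 * a ^ 2 * b ^ 2 * hςκ + 4 * b ^ 2 * hlam2

theorem eq_gaussianAnsatz_typeIII {P : ℝ → ℝ → ℝ}
    (hP : ∀ t x, P t x =
      √(lam / (4 * π * θ * sin (lam * t)))
        * exp ((a / 2 + ρ * b ^ 2 / lam ^ 2) * t
            - a ^ 2 * b ^ 2 / (4 * θ * lam ^ 3) * cot (lam * t))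
        * exp ((a / (4 * θ) - lam / (4 * θ) * cot (lam * t)) * (x ^ 2 + x₀ ^ 2))
        * exp (lam / (2 * θ * sin (lam * t)) * (x * x₀))
        * exp ((a * b / (2 * θ * lam) * cot (lam * t) + b / (2 * θ)) * x)
        * exp ((-(a * b / (2 * θ * lam * sin (lam * t))) + b / (2 * θ)) * x₀)) :
    P = gaussianAnsatz (typeIIIAmplitude θ lam) (typeIIIQuad θ a lam) (typeIIILin θ a b lam x₀)
      (typeIIIConst θ a b ρ lam x₀) := by
  funext t x
  rw [hP, gaussianAnsatz, typeIIIAmplitude, typeIIIQuad, typeIIILin, typeIIIConst]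
  simp only [mul_assoc, ← exp_add]
  congr 2 <;> ring

end TypeIII

theorem stmt_16_general (θ a b ρ : ℝ) (hθ : 0 < θ) (h : a ^ 2 + 4 * ρ * θ < 0)
    (lam : ℝ) (hlam : lam = Real.sqrt (-a ^ 2 - 4 * ρ * θ))
    (x₀ : ℝ) (P : ℝ → ℝ → ℝ)
    (hP : ∀ t x, P t x =
      Real.sqrt (lam / (4 * Real.pi * θ * Real.sin (lam * t)))
        * Real.exp ((a / 2 + ρ * b ^ 2 / lam ^ 2) * t
            - a ^ 2 * b ^ 2 / (4 * θ * lam ^ 3) * Real.cot (lam * t))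
        * Real.exp ((a / (4 * θ) - lam / (4 * θ) * Real.cot (lam * t)) * (x ^ 2 + x₀ ^ 2))
        * Real.exp (lam / (2 * θ * Real.sin (lam * t)) * (x * x₀))
        * Real.exp ((a * b / (2 * θ * lam) * Real.cot (lam * t) + b / (2 * θ)) * x)
        * Real.exp ((-(a * b / (2 * θ * lam * Real.sin (lam * t))) + b / (2 * θ)) * x₀)) :
    ∀ t ∈ Set.Ioo (0 : ℝ) (Real.pi / lam), ∀ x : ℝ,
      deriv (fun t' => P t' x) t =
        θ * deriv (deriv (fun x' => P t x')) x
          - (a * x + b) * deriv (fun x' => P t x') x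
          - ρ * x ^ 2 * P t x := by
  have hdisc : 0 < -a ^ 2 - 4 * ρ * θ := by linarith
  have hlam0 : 0 < lam := hlam ▸ sqrt_pos.mpr hdisc
  have hlam2 : lam ^ 2 = -a ^ 2 - 4 * ρ * θ := hlam ▸ sq_sqrt hdisc.le
  rintro t ⟨ht0, htπ⟩ x
  have hs : sin (lam * t) ≠ 0 :=
    (sin_pos_of_pos_of_lt_pi (by positivity) (by rwa [lt_div_iff₀ hlam0, mul_comm] at htπ)).ne'
  rw [eq_gaussianAnsatz_typeIII hP]
  exact gaussianAnsatz_heat_eq x (hasDerivAt_typeIIIAmplitude hθ.ne' hlam0.ne' hs)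
    (hasDerivAt_typeIIIQuad hθ.ne' hlam2 hs) (hasDerivAt_typeIIILin hθ.ne' hlam0.ne' hs)
    (hasDerivAt_typeIIIConst hθ.ne' hlam0.ne' hlam2 hs)

/-- The Type III heat kernel (case `a² + 4ρθ < 0`, `λ = √(-a²-4ρθ)`) of
`L = -θ∂ₓ² + (ax+b)∂ₓ + ρx²` satisfies `∂ₜP = θ∂ₓ²P - (ax+b)∂ₓP - ρx²P` on `(0, π/λ)`. -/
theorem stmt_16 (θ a b ρ : ℝ) (hθ : 0 < θ) (hρ : ρ ≠ 0) (h : a ^ 2 + 4 * ρ * θ < 0)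
    (lam : ℝ) (hlam : lam = Real.sqrt (-a ^ 2 - 4 * ρ * θ))
    (x₀ : ℝ) (P : ℝ → ℝ → ℝ)
    (hP : ∀ t x, P t x =
      Real.sqrt (lam / (4 * Real.pi * θ * Real.sin (lam * t)))
        * Real.exp ((a / 2 + ρ * b ^ 2 / lam ^ 2) * t
            - a ^ 2 * b ^ 2 / (4 * θ * lam ^ 3) * Real.cot (lam * t))
        * Real.exp ((a / (4 * θ) - lam / (4 * θ) * Real.cot (lam * t)) * (x ^ 2 + x₀ ^ 2))
        * Real.exp (lam / (2 * θ * Real.sin (lam * t)) * (x * x₀))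
        * Real.exp ((a * b / (2 * θ * lam) * Real.cot (lam * t) + b / (2 * θ)) * x)
        * Real.exp ((-(a * b / (2 * θ * lam * Real.sin (lam * t))) + b / (2 * θ)) * x₀)) :
    ∀ t ∈ Set.Ioo (0 : ℝ) (Real.pi / lam), ∀ x : ℝ,
      deriv (fun t' => P t' x) t =
        θ * deriv (deriv (fun x' => P t x')) x
          - (a * x + b) * deriv (fun x' => P t x') x
          - ρ * x ^ 2 * P t x :=
  stmt_16_general θ a b ρ hθ h lam hlam x₀ P hP
end

section
/- Let n ≥ 1 and x₀ ∈ ℝⁿ. Define, for t ∈ (0, π/√3) and x ∈ ℝⁿ, P(t, x) = (√3·e^t / (4π·sin(√3·t)))^{n/2} · exp{((1 - √3·cot(√3·t))/4)·(|x|² + |x₀|²) + (√3/(2·sin(√3·t)))·(x·x₀)}, where x·x₀ is the Euclidean inner product and |·| the Euclidean norm. Then P satisfies ∂ₜP(t,x) = ΔP(t,x) - x·∇P(t,x) + |x|²·P(t,x) for all t ∈ (0, π/√3) and x ∈ ℝⁿ, where Δ and ∇ act in the variable x. -/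
/-!
For fixed `t` the kernel is a Gaussian `F t * exp (B t * (|x|² + |x₀|²) + C t * x·x₀)` in `x`.
Applying `Δ - x·∇ + |x|²` to a Gaussian multiplies it by a quadratic polynomial in `x`, so
the equation reduces to the coefficient system `F' = 2nBF`, `B' = 4B² - 2B + 1`,
`C' = (4B - 1)C`, together with `C² = B'` for the `|x₀|²` term. With `A = √3 eᵗ/(4π sin √3t)`,
`B = (1 - √3 cot √3t)/4`, `C = √3/(2 sin √3t)` and `F = A^{n/2}`, each identity reduces to
`sin² + cos² = 1` and `√3² = 3`.
-/

open Real Finset Function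

lemma hasDerivAt_const_mul_exp_quadratic (K b c d y : ℝ) :
    HasDerivAt (fun z => K * exp (b * z ^ 2 + c * z + d))
      ((2 * b * y + c) * (K * exp (b * y ^ 2 + c * y + d))) y := by
  have hsq : HasDerivAt (fun z => z ^ 2) (2 * y) y := by simpa using hasDerivAt_pow 2 y
  have hq : HasDerivAt (fun z => b * z ^ 2 + c * z + d) (2 * b * y + c) y :=
    (((hsq.const_mul b).add ((hasDerivAt_id' y).const_mul c)).add_const d).congr_deriv (by ring)
  exact (hq.exp.const_mul K).congr_deriv (by ring)

lemma deriv_deriv_const_mul_exp_quadratic (K b c d y : ℝ) :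
    deriv (deriv fun z => K * exp (b * z ^ 2 + c * z + d)) y
      = ((2 * b * y + c) ^ 2 + 2 * b) * (K * exp (b * y ^ 2 + c * y + d)) := by
  have hderiv : deriv (fun z => K * exp (b * z ^ 2 + c * z + d))
      = fun z => (2 * b * z + c) * (K * exp (b * z ^ 2 + c * z + d)) :=
    funext fun z => (hasDerivAt_const_mul_exp_quadratic K b c d z).deriv
  have hlin : HasDerivAt (fun z => 2 * b * z + c) (2 * b) y := by
    simpa using ((hasDerivAt_id y).const_mul (2 * b)).add_const c
  rw [hderiv]
  exact (hlin.mul (hasDerivAt_const_mul_exp_quadratic K b c d y)).deriv.trans (by ring)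

section Gaussian

variable {ι : Type*} [Fintype ι] [DecidableEq ι]

lemma sum_apply_update (f : ι → ℝ → ℝ) (x : ι → ℝ) (j : ι) (y : ℝ) :
    ∑ i, f i (update x j y i) = ∑ i, f i (x i) + (f j y - f j (x j)) := by
  rw [← add_sum_erase _ _ (mem_univ j), ← add_sum_erase _ (fun i => f i (x i)) (mem_univ j),
    update_self, sum_congr rfl fun i hi => by rw [update_of_ne (ne_of_mem_erase hi)]]
  ring

noncomputable def gaussian (K b : ℝ) (c : ι → ℝ) (d : ℝ) (x : ι → ℝ) : ℝ :=
  K * exp (b * ∑ i, x i ^ 2 + ∑ i, c i * x i + d)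

lemma gaussian_update (K b : ℝ) (c : ι → ℝ) (d : ℝ) (x : ι → ℝ) (j : ι) (y : ℝ) :
    gaussian K b c d (update x j y) = K * exp (b * y ^ 2 + c j * y
      + (b * (∑ i, x i ^ 2 - x j ^ 2) + (∑ i, c i * x i - c j * x j) + d)) := by
  have hsq := sum_apply_update (fun _ z => z ^ 2) x j y
  have hlin := sum_apply_update (fun i z => c i * z) x j y
  rw [gaussian, hsq, hlin]
  ring_nf

lemma gaussian_eq_update_self (K b : ℝ) (c : ι → ℝ) (d : ℝ) (x : ι → ℝ) (j : ι) :
    gaussian K b c d x = K * exp (b * x j ^ 2 + c j * x j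
      + (b * (∑ i, x i ^ 2 - x j ^ 2) + (∑ i, c i * x i - c j * x j) + d)) := by
  rw [← gaussian_update, update_eq_self]

lemma deriv_gaussian_update (K b : ℝ) (c : ι → ℝ) (d : ℝ) (x : ι → ℝ) (j : ι) :
    deriv (fun y => gaussian K b c d (update x j y)) (x j)
      = (2 * b * x j + c j) * gaussian K b c d x := by
  simp only [gaussian_update]
  rw [(hasDerivAt_const_mul_exp_quadratic _ _ _ _ _).deriv, gaussian_eq_update_self K b c d x j]

lemma deriv_deriv_gaussian_update (K b : ℝ) (c : ι → ℝ) (d : ℝ) (x : ι → ℝ) (j : ι) :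
    deriv (deriv fun y => gaussian K b c d (update x j y)) (x j)
      = ((2 * b * x j + c j) ^ 2 + 2 * b) * gaussian K b c d x := by
  simp only [gaussian_update]
  rw [deriv_deriv_const_mul_exp_quadratic, gaussian_eq_update_self K b c d x j]

lemma laplacian_sub_drift_add_potential_gaussian (K b : ℝ) (c : ι → ℝ) (d : ℝ) (x : ι → ℝ) :
    ∑ j, deriv (deriv fun y => gaussian K b c d (update x j y)) (x j)
        - ∑ j, x j * deriv (fun y => gaussian K b c d (update x j y)) (x j)
        + (∑ j, x j ^ 2) * gaussian K b c d x
      = ((4 * b ^ 2 - 2 * b + 1) * ∑ j, x j ^ 2 + (4 * b - 1) * ∑ j, c j * x j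
          + ∑ j, c j ^ 2 + 2 * Fintype.card ι * b) * gaussian K b c d x := by
  simp only [deriv_deriv_gaussian_update, deriv_gaussian_update, Fintype.card_eq_sum_ones,
    Nat.cast_sum, Nat.cast_one, mul_sum, add_mul, sum_mul, ← sum_sub_distrib, ← sum_add_distrib]
  exact sum_congr rfl fun j _ => by ring

theorem deriv_eq_of_gaussian_riccati (F B C : ℝ → ℝ) (x₀ : ι → ℝ) (u : ℝ → (ι → ℝ) → ℝ)
    (hu : ∀ t x, u t x = F t * exp (B t * ((∑ j, x j ^ 2) + ∑ j, x₀ j ^ 2)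
      + C t * ∑ j, x j * x₀ j))
    {t : ℝ} (hF : HasDerivAt F (2 * Fintype.card ι * B t * F t) t)
    (hB : HasDerivAt B (4 * B t ^ 2 - 2 * B t + 1) t) (hC : HasDerivAt C ((4 * B t - 1) * C t) t)
    (hBC : C t ^ 2 = 4 * B t ^ 2 - 2 * B t + 1) (x : ι → ℝ) :
    deriv (fun t' => u t' x) t =
      (∑ j, deriv (deriv (fun y => u t (update x j y))) (x j))
        - (∑ j, x j * deriv (fun y => u t (update x j y)) (x j))
        + (∑ j, x j ^ 2) * u t x := by
  have hlin : ∀ y : ι → ℝ, ∑ j, C t * x₀ j * y j = C t * ∑ j, y j * x₀ j := fun y => by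
    rw [mul_sum]; exact sum_congr rfl fun j _ => by ring
  have hquad : ∑ j, (C t * x₀ j) ^ 2 = C t ^ 2 * ∑ j, x₀ j ^ 2 := by
    rw [mul_sum]; exact sum_congr rfl fun j _ => by ring
  have hut : u t = gaussian (F t) (B t) (fun j => C t * x₀ j) (B t * ∑ j, x₀ j ^ 2) := by
    ext y
    rw [hu, gaussian, hlin]
    ring_nf
  have htime := hF.mul ((hB.mul_const ((∑ j, x j ^ 2) + ∑ j, x₀ j ^ 2)).add
    (hC.mul_const (∑ j, x j * x₀ j))).exp
  conv_lhs => rw [funext (hu · x)]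
  refine htime.deriv.trans ?_
  rw [hut, laplacian_sub_drift_add_potential_gaussian, hlin, hquad, ← hut, hu, Pi.add_apply]
  linear_combination (-F t) * exp (B t * ((∑ j, x j ^ 2) + ∑ j, x₀ j ^ 2) + C t * ∑ j, x j * x₀ j)
    * (∑ j, x₀ j ^ 2) * hBC

end Gaussian

lemma HasDerivAt.rpow_const_of_eq_mul {f : ℝ → ℝ} {k t : ℝ} (hf : HasDerivAt f (k * f t) t)
    (ht : f t ≠ 0) (p : ℝ) : HasDerivAt (fun s => f s ^ p) (p * k * f t ^ p) t :=
  (hf.rpow_const (Or.inl ht)).congr_deriv (by rw [rpow_sub_one ht]; field_simp)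

noncomputable def kernelA (t : ℝ) : ℝ := √3 * exp t / (4 * π * sin (√3 * t))

noncomputable def kernelB (t : ℝ) : ℝ := (1 - √3 * cot (√3 * t)) / 4

noncomputable def kernelC (t : ℝ) : ℝ := √3 / (2 * sin (√3 * t))

section KernelCoefficients

variable {t : ℝ} (hsin : sin (√3 * t) ≠ 0)
include hsin

lemma kernelA_ne_zero : kernelA t ≠ 0 := by
  unfold kernelA
  exact div_ne_zero (by positivity) (mul_ne_zero (by positivity) hsin)

lemma hasDerivAt_kernelA : HasDerivAt kernelA (4 * kernelB t * kernelA t) t := by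
  have hs := ((hasDerivAt_id' t).const_mul √3).sin
  refine (((hasDerivAt_exp t).const_mul √3).div (hs.const_mul (4 * π))
    (mul_ne_zero (by positivity) hsin)).congr_deriv ?_
  unfold kernelA kernelB
  rw [cot_eq_cos_div_sin]
  field_simp

lemma hasDerivAt_kernelB :
    HasDerivAt kernelB (4 * kernelB t ^ 2 - 2 * kernelB t + 1) t := by
  have hs := ((hasDerivAt_id' t).const_mul √3).sin
  have hc := ((hasDerivAt_id' t).const_mul √3).cos
  have hB : kernelB = fun s => (1 - √3 * (cos (√3 * s) / sin (√3 * s))) / 4 :=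
    funext fun s => by rw [kernelB, cot_eq_cos_div_sin]
  rw [hB]
  refine ((((hc.div hs hsin).const_mul √3).const_sub 1).div_const 4).congr_deriv ?_
  field_simp
  linear_combination sin (√3 * t) ^ 2 * sq_sqrt (by norm_num : (0 : ℝ) ≤ 3)

lemma hasDerivAt_kernelC : HasDerivAt kernelC ((4 * kernelB t - 1) * kernelC t) t := by
  have hs := ((hasDerivAt_id' t).const_mul √3).sin
  refine ((hasDerivAt_const t √3).div (hs.const_mul 2)
    (mul_ne_zero two_ne_zero hsin)).congr_deriv ?_
  unfold kernelB kernelC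
  rw [cot_eq_cos_div_sin]
  field_simp
  ring

lemma kernelC_sq : kernelC t ^ 2 = 4 * kernelB t ^ 2 - 2 * kernelB t + 1 := by
  unfold kernelB kernelC
  rw [cot_eq_cos_div_sin]
  field_simp
  linear_combination 4 * sin (√3 * t) ^ 2 * sq_sqrt (by norm_num : (0 : ℝ) ≤ 3)
    - 4 * √3 ^ 2 * sin_sq_add_cos_sq (√3 * t)

end KernelCoefficients

theorem stmt_19_general (n : ℕ) (x₀ : Fin n → ℝ) (P : ℝ → (Fin n → ℝ) → ℝ)
    (hP : ∀ t x, P t x =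
      (Real.sqrt 3 * Real.exp t / (4 * Real.pi * Real.sin (Real.sqrt 3 * t))) ^ ((n : ℝ) / 2)
        * Real.exp ((1 - Real.sqrt 3 * Real.cot (Real.sqrt 3 * t)) / 4
              * ((∑ j, x j ^ 2) + ∑ j, x₀ j ^ 2)
            + Real.sqrt 3 / (2 * Real.sin (Real.sqrt 3 * t)) * ∑ j, x j * x₀ j)) :
    ∀ t ∈ Set.Ioo (0 : ℝ) (Real.pi / Real.sqrt 3), ∀ x : Fin n → ℝ,
      deriv (fun t' => P t' x) t =
        (∑ j, deriv (deriv (fun y => P t (Function.update x j y))) (x j))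
          - (∑ j, x j * deriv (fun y => P t (Function.update x j y)) (x j))
          + (∑ j, x j ^ 2) * P t x := by
  rintro t ⟨ht₀, htπ⟩ x
  have hsin : sin (√3 * t) ≠ 0 := by
    refine (sin_pos_of_pos_of_lt_pi (by positivity) ?_).ne'
    rwa [lt_div_iff₀ (by positivity), mul_comm] at htπ
  have hF := (hasDerivAt_kernelA hsin).rpow_const_of_eq_mul (kernelA_ne_zero hsin) ((n : ℝ) / 2)
  refine deriv_eq_of_gaussian_riccati (kernelA · ^ ((n : ℝ) / 2)) kernelB kernelC x₀ P hP ?_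
    (hasDerivAt_kernelB hsin) (hasDerivAt_kernelC hsin) (kernelC_sq hsin) x
  exact hF.congr_deriv (by rw [Fintype.card_fin]; ring)

/-- The heat kernel of the `n`-dimensional perturbed Ornstein-Uhlenbeck operator
`L⁻ = -Δ + x·∇ - |x|²` satisfies `∂ₜP = ΔP - x·∇P + |x|²P` on `(0, π/√3)`. -/
theorem stmt_19 (n : ℕ) (hn : 1 ≤ n) (x₀ : Fin n → ℝ) (P : ℝ → (Fin n → ℝ) → ℝ)
    (hP : ∀ t x, P t x =
      (Real.sqrt 3 * Real.exp t / (4 * Real.pi * Real.sin (Real.sqrt 3 * t))) ^ ((n : ℝ) / 2)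
        * Real.exp ((1 - Real.sqrt 3 * Real.cot (Real.sqrt 3 * t)) / 4
              * ((∑ j, x j ^ 2) + ∑ j, x₀ j ^ 2)
            + Real.sqrt 3 / (2 * Real.sin (Real.sqrt 3 * t)) * ∑ j, x j * x₀ j)) :
    ∀ t ∈ Set.Ioo (0 : ℝ) (Real.pi / Real.sqrt 3), ∀ x : Fin n → ℝ,
      deriv (fun t' => P t' x) t =
        (∑ j, deriv (deriv (fun y => P t (Function.update x j y))) (x j))
          - (∑ j, x j * deriv (fun y => P t (Function.update x j y)) (x j))
          + (∑ j, x j ^ 2) * P t x :=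
  stmt_19_general n x₀ P hP
end
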